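/- arXiv:2504.14230 — 7 statements merged into one kernel-verified Lean document; each statement's English description precedes it below -/
import Mathlib

section
/- Let N be a finite set and let v be a TU-game on N. A player i ∈ N is a null player in v if and only if λ_T(v) = 0 for every nonempty coalition T ⊆ N containing i. -/
open Finset

variable {ι κ : Type*}

/-- The Harsanyi dividend of a coalition `T` in the TU-game `v`. -/
noncomputable def dividend (v : Finset ι → ℝ) (T : Finset ι) : ℝ :=
  ∑ S ∈ T.powerset, (-1 : ℝ) ^ (T.card - S.card) * v S

/-- `i` is a null player in the TU-game `v` on player set `N`. -/
def NullPlayer [DecidableEq ι] (v : Finset ι → ℝ) (N : Finset ι) (i : ι) : Prop :=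
  ∀ S ⊆ N \ {i}, v (insert i S) = v S

/-- `i` is a necessary player in the TU-game `v` on player set `N`. -/
def Necessary [DecidableEq ι] (v : Finset ι → ℝ) (N : Finset ι) (i : ι) : Prop :=
  ∀ S ⊆ N \ {i}, v S = 0

/-- `i` and `j` are mutually dependent in the TU-game `v` on player set `N`. -/
def MutDep [DecidableEq ι] (v : Finset ι → ℝ) (N : Finset ι) (i j : ι) : Prop :=
  ∀ S ⊆ N \ {i, j}, v (insert i S) - v S = 0 ∧ v (insert j S) - v S = 0

/-- `i` and `j` are symmetric players in the TU-game `v` on player set `N`. -/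
def SymmPlayers [DecidableEq ι] (v : Finset ι → ℝ) (N : Finset ι) (i j : ι) : Prop :=
  ∀ S ⊆ N \ {i, j}, v (insert i S) - v S = v (insert j S) - v S

/-- Two unions `Bp` and `Bq` are highly mutually dependent in `v`. -/
def HighlyMD [DecidableEq ι] (v : Finset ι → ℝ) (N : Finset ι) (Bp Bq : Finset ι) : Prop :=
  ∀ i ∈ Bp, ∀ j ∈ Bq, MutDep v N i j

/-- `B` (indexed by the finite index set `M`) is a coalition structure on `N`:
nonempty, pairwise disjoint unions covering `N`. -/
def IsCS [DecidableEq ι] (N : Finset ι) (M : Finset κ) (B : κ → Finset ι) : Prop :=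
  (∀ p ∈ M, (B p).Nonempty) ∧
  (∀ p ∈ M, ∀ q ∈ M, p ≠ q → Disjoint (B p) (B q)) ∧
  M.biUnion B = N

/-- The quotient game `v^B` on the index set of the coalition structure. -/
def quotientGame [DecidableEq ι] (v : Finset ι → ℝ) (B : κ → Finset ι) : Finset κ → ℝ :=
  fun R => v (R.biUnion B)

/-- The Owen value of player `i` belonging to union `B p` in the CS-game `(N, v, B)`. -/
noncomputable def Owen [DecidableEq ι] (v : Finset ι → ℝ) (N : Finset ι) (M : Finset κ)
    (B : κ → Finset ι) (p : κ) (i : ι) : ℝ :=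
  ∑ T ∈ N.powerset.filter (fun T => i ∈ T),
    dividend v T / (((B p ∩ T).card : ℝ) * ((M.filter (fun q => ((B q) ∩ T).Nonempty)).card : ℝ))

/-- The Shapley value of player `i` in the TU-game `(N, v)`. -/
noncomputable def Shapley [DecidableEq ι] (v : Finset ι → ℝ) (N : Finset ι) (i : ι) : ℝ :=
  ∑ T ∈ N.powerset.filter (fun T => i ∈ T), dividend v T / (T.card : ℝ)

lemma sum_dividend_powerset {ι : Type*} [DecidableEq ι] (v : Finset ι → ℝ) (U : Finset ι) :
    ∑ T ∈ U.powerset, dividend v T = v U := by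
  unfold dividend
  rw [Finset.sum_comm' (t' := U.powerset)
      (s' := fun S => U.powerset.filter (fun T => S ⊆ T))
      (by intro T S; simp only [Finset.mem_powerset, Finset.mem_filter]
          constructor
          · rintro ⟨h1, h2⟩; exact ⟨⟨h1, h2⟩, h2.trans h1⟩
          · rintro ⟨⟨h1, h2⟩, _⟩; exact ⟨h1, h2⟩)]
  have key : ∀ S ∈ U.powerset,
      (∑ T ∈ U.powerset.filter (fun T => S ⊆ T), (-1 : ℝ) ^ (T.card - S.card) * v S)
        = if S = U then v S else 0 := by
    intro S hS
    rw [Finset.mem_powerset] at hS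
    rw [← Finset.sum_mul]
    have hre : (∑ T ∈ U.powerset.filter (fun T => S ⊆ T), (-1 : ℝ) ^ (T.card - S.card))
        = ∑ R ∈ (U \ S).powerset, (-1 : ℝ) ^ R.card := by
      apply Finset.sum_nbij' (i := fun T => T \ S) (j := fun R => S ∪ R)
      · intro T hT
        simp only [Finset.mem_filter, Finset.mem_powerset] at hT ⊢
        exact Finset.sdiff_subset_sdiff hT.1 (le_refl _)
      · intro R hR
        simp only [Finset.mem_powerset] at hR
        simp only [Finset.mem_filter, Finset.mem_powerset]
        exact ⟨Finset.union_subset hS ((hR.trans (Finset.sdiff_subset))),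
          Finset.subset_union_left⟩
      · intro T hT
        simp only [Finset.mem_filter, Finset.mem_powerset] at hT
        exact Finset.union_sdiff_of_subset hT.2
      · intro R hR
        simp only [Finset.mem_powerset] at hR
        have : Disjoint S R := Finset.disjoint_of_subset_right hR Finset.disjoint_sdiff
        rw [Finset.union_sdiff_cancel_left this]
      · intro T hT
        simp only [Finset.mem_filter, Finset.mem_powerset] at hT
        rw [Finset.card_sdiff_of_subset hT.2]
    rw [hre]
    have hz : (∑ R ∈ (U \ S).powerset, (-1 : ℝ) ^ R.card)
        = if (U \ S) = ∅ then 1 else 0 := by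
      exact_mod_cast (Finset.sum_powerset_neg_one_pow_card (x := U \ S))
    rw [hz]
    have : (U \ S) = ∅ ↔ S = U := by
      rw [Finset.sdiff_eq_empty_iff_subset]
      exact ⟨fun h => le_antisymm hS h, fun h => h ▸ le_refl _⟩
    by_cases hSU : S = U <;> simp [this, hSU]
  rw [Finset.sum_congr rfl key, Finset.sum_ite_eq' U.powerset U v,
    if_pos (Finset.mem_powerset.mpr (le_refl _))]

/-- `i ∈ N` is a null player in `v` iff `λ_T(v) = 0` for every
nonempty coalition `T ⊆ N` containing `i`. -/
theorem nullPlayer_iff_dividends_eq_zero {ι : Type*} [DecidableEq ι]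
    (N : Finset ι) (v : Finset ι → ℝ) (hv : v ∅ = 0) (i : ι) (hi : i ∈ N) :
    NullPlayer v N i ↔ ∀ T ⊆ N, T.Nonempty → i ∈ T → dividend v T = 0 := by
  constructor
  · intro h T hTN _ hiT
    have hie : i ∉ T.erase i := Finset.notMem_erase _ _
    have hT : T = insert i (T.erase i) := (Finset.insert_erase hiT).symm
    rw [dividend, hT, Finset.sum_powerset_insert hie, ← Finset.sum_add_distrib]
    apply Finset.sum_eq_zero
    intro S hS
    rw [Finset.mem_powerset] at hS
    have hiS : i ∉ S := fun hmem => hie (hS hmem)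
    have hSN : S ⊆ N \ {i} := by
      intro x hx
      rw [Finset.mem_sdiff, Finset.mem_singleton]
      have hx' := hS hx
      rw [Finset.mem_erase] at hx'
      exact ⟨hTN (Finset.mem_of_mem_erase (hS hx)), hx'.1⟩
    have hnull : v (insert i S) = v S := h S hSN
    have hc1 : (insert i (T.erase i)).card = (T.erase i).card + 1 :=
      Finset.card_insert_of_notMem hie
    have hc2 : (insert i S).card = S.card + 1 := Finset.card_insert_of_notMem hiS
    have hle : S.card ≤ (T.erase i).card := Finset.card_le_card hS
    rw [hnull, hc1, hc2,
      show (T.erase i).card + 1 - S.card = ((T.erase i).card - S.card) + 1 by omega,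
      show (T.erase i).card + 1 - (S.card + 1) = (T.erase i).card - S.card by omega,
      pow_succ]
    ring
  · intro h S hS
    have hiS : i ∉ S := fun hmem => by
      have := hS hmem
      rw [Finset.mem_sdiff, Finset.mem_singleton] at this
      exact this.2 rfl
    have hSN : S ⊆ N := hS.trans (Finset.sdiff_subset)
    rw [← sum_dividend_powerset v (insert i S), ← sum_dividend_powerset v S,
      Finset.sum_powerset_insert hiS]
    have hzero : ∑ T ∈ S.powerset, dividend v (insert i T) = 0 := by
      apply Finset.sum_eq_zero
      intro T hT
      rw [Finset.mem_powerset] at hT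
      exact h (insert i T) (Finset.insert_subset hi (hT.trans hSN))
        (Finset.insert_nonempty _ _) (Finset.mem_insert_self _ _)
    rw [hzero, add_zero]
end

section
/- Let N be a finite set and let v be a TU-game on N. Two players i, j ∈ N with i ≠ j are mutually dependent in v if and only if λ_{T ∪ {i}}(v) = 0 and λ_{T ∪ {j}}(v) = 0 for every T ⊆ N \ {i, j} (including T = ∅ for the singletons {i} and {j}). -/
open Finset

variable {ι κ : Type*}

lemma dividend_insert_aux [DecidableEq ι] (v : Finset ι → ℝ) {i : ι} {T : Finset ι}
    (hi : i ∉ T) :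
    dividend v (insert i T) =
      ∑ S ∈ T.powerset, (-1 : ℝ) ^ (T.card - S.card) * (v (insert i S) - v S) := by
  unfold dividend
  rw [Finset.powerset_insert, Finset.sum_union, Finset.sum_image]
  · have hcard : (insert i T).card = T.card + 1 := Finset.card_insert_of_notMem hi
    have h1 : ∀ S ∈ T.powerset, (-1 : ℝ) ^ ((insert i T).card - S.card) * v S
        = -((-1 : ℝ) ^ (T.card - S.card)) * v S := by
      intro S hS
      have hle : S.card ≤ T.card := Finset.card_le_card (Finset.mem_powerset.mp hS)
      have : (insert i T).card - S.card = (T.card - S.card) + 1 := by omega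
      rw [this, pow_succ]
      ring
    have h2 : ∀ S ∈ T.powerset, (-1 : ℝ) ^ ((insert i T).card - (insert i S).card) * v (insert i S)
        = (-1 : ℝ) ^ (T.card - S.card) * v (insert i S) := by
      intro S hS
      have hiS : i ∉ S := fun h => hi (Finset.mem_powerset.mp hS h)
      rw [hcard, Finset.card_insert_of_notMem hiS]
      congr 2
      omega
    rw [Finset.sum_congr rfl h1, Finset.sum_congr rfl h2, ← Finset.sum_add_distrib]
    apply Finset.sum_congr rfl
    intro S hS
    ring
  · intro S hS S' hS' h
    have hiS : i ∉ S := fun hh => hi (Finset.mem_powerset.mp hS hh)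
    have hiS' : i ∉ S' := fun hh => hi (Finset.mem_powerset.mp hS' hh)
    have := congrArg (fun X => Finset.erase X i) h
    simpa [Finset.erase_insert hiS, Finset.erase_insert hiS'] using this
  · rw [Finset.disjoint_left]
    intro S hS hS'
    simp only [Finset.mem_image, Finset.mem_powerset] at hS'
    obtain ⟨S', _, rfl⟩ := hS'
    exact hi (Finset.mem_powerset.mp hS (Finset.mem_insert_self i S'))

lemma marginal_zero_iff_dividends [DecidableEq ι] (v : Finset ι → ℝ) (W : Finset ι) {i : ι}
    (hi : i ∉ W) :
    (∀ S ⊆ W, v (insert i S) - v S = 0) ↔ (∀ T ⊆ W, dividend v (insert i T) = 0) := by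
  constructor
  · intro h T hT
    rw [dividend_insert_aux v (fun hh => hi (hT hh))]
    apply Finset.sum_eq_zero
    intro S hS
    rw [h S ((Finset.mem_powerset.mp hS).trans hT)]
    ring
  · intro h
    intro S
    induction S using Finset.strongInduction with
    | _ S ih =>
      intro hS
      have hd := h S hS
      rw [dividend_insert_aux v (fun hh => hi (hS hh))] at hd
      rw [← Finset.add_sum_erase _ _ (Finset.mem_powerset_self S)] at hd
      simp only [Nat.sub_self, pow_zero, one_mul] at hd
      have hrest : ∑ S' ∈ (Finset.erase S.powerset S),
          (-1 : ℝ) ^ (S.card - S'.card) * (v (insert i S') - v S') = 0 := by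
        apply Finset.sum_eq_zero
        intro S' hS'
        have hmem := Finset.mem_erase.mp hS'
        have hsub : S' ⊆ S := Finset.mem_powerset.mp hmem.2
        have hss : S' ⊂ S := Finset.ssubset_iff_subset_ne.mpr ⟨hsub, hmem.1⟩
        rw [ih S' hss (hsub.trans hS)]
        ring
      rw [hrest, add_zero] at hd
      exact hd

/-- `i ≠ j` are mutually dependent in `v` iff
`λ_{T∪{i}}(v) = λ_{T∪{j}}(v) = 0` for every `T ⊆ N \ {i, j}`. -/
theorem mutDep_iff_dividends_eq_zero {ι : Type*} [DecidableEq ι]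
    (N : Finset ι) (v : Finset ι → ℝ) (hv : v ∅ = 0)
    (i j : ι) (hi : i ∈ N) (hj : j ∈ N) (hij : i ≠ j) :
    MutDep v N i j ↔
      ∀ T ⊆ N \ {i, j}, dividend v (insert i T) = 0 ∧ dividend v (insert j T) = 0 := by
  have hiW : i ∉ N \ ({i, j} : Finset ι) := by simp
  have hjW : j ∉ N \ ({i, j} : Finset ι) := by simp
  constructor
  · intro h T hT
    exact ⟨(marginal_zero_iff_dividends v _ hiW).mp (fun S hS => (h S hS).1) T hT,
      (marginal_zero_iff_dividends v _ hjW).mp (fun S hS => (h S hS).2) T hT⟩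
  · intro h S hS
    exact ⟨(marginal_zero_iff_dividends v _ hiW).mpr (fun T hT => (h T hT).1) S hS,
      (marginal_zero_iff_dividends v _ hjW).mpr (fun T hT => (h T hT).2) S hS⟩
end

section
/- Let (N, v, B) be a CS-game, where B = {B_1, …, B_m} is a coalition structure on N indexed by M = {1, …, m}, and let v^B be the quotient game on M. Then for every nonempty R ⊆ M, the Harsanyi dividend of R in the quotient game satisfies λ_R(v^B) = Σ_T λ_T(v), where the sum ranges over all nonempty T ⊆ N such that the set of indices r ∈ M with T ∩ B_r ≠ ∅ is exactly R. -/
open Finset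

variable {ι κ : Type*}

private lemma neg_one_pow_powerset_sum {α : Type*} [DecidableEq α] (s : Finset α) :
    (∑ t ∈ s.powerset, (-1 : ℝ) ^ t.card) = if s = ∅ then 1 else 0 := by
  have h := Finset.sum_powerset_neg_one_pow_card (x := s)
  have h2 : ((∑ m ∈ s.powerset, (-1 : ℤ) ^ m.card : ℤ) : ℝ)
      = ((if s = ∅ then 1 else 0 : ℤ) : ℝ) := by rw [h]
  push_cast at h2
  rw [← h2]

private lemma reindex_sum {α : Type*} [DecidableEq α] {U S : Finset α} (hUS : U ⊆ S)
    (f : ℕ → ℝ) :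
    ∑ Q ∈ S.powerset.filter (fun Q => U ⊆ Q), f Q.card
      = ∑ W ∈ (S \ U).powerset, f (W.card + U.card) := by
  refine Finset.sum_nbij' (fun Q => Q \ U) (fun W => W ∪ U) ?_ ?_ ?_ ?_ ?_
  · intro Q hQ
    simp only [Finset.mem_filter, Finset.mem_powerset] at hQ ⊢
    exact Finset.sdiff_subset_sdiff hQ.1 Finset.Subset.rfl
  · intro W hW
    simp only [Finset.mem_filter, Finset.mem_powerset] at hW ⊢
    exact ⟨Finset.union_subset (hW.trans Finset.sdiff_subset) hUS, Finset.subset_union_right⟩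
  · intro Q hQ
    simp only [Finset.mem_filter, Finset.mem_powerset] at hQ
    exact Finset.sdiff_union_of_subset hQ.2
  · intro W hW
    simp only [Finset.mem_powerset] at hW
    have hd : Disjoint W U := Finset.disjoint_of_subset_left hW Finset.sdiff_disjoint
    rw [Finset.union_sdiff_right, Finset.sdiff_eq_self_of_disjoint hd]
  · intro Q hQ
    simp only [Finset.mem_filter, Finset.mem_powerset] at hQ
    congr 1
    rw [Finset.card_sdiff_of_subset hQ.2]
    have := Finset.card_le_card hQ.2
    omega

private lemma interval_sum_hi {α : Type*} [DecidableEq α] {U S : Finset α} (hUS : U ⊆ S) :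
    (∑ Q ∈ S.powerset.filter (fun Q => U ⊆ Q), (-1 : ℝ) ^ (S.card - Q.card))
      = if U = S then 1 else 0 := by
  rw [reindex_sum hUS (fun n => (-1 : ℝ) ^ (S.card - n))]
  have hc : ∀ W ∈ (S \ U).powerset, (-1 : ℝ) ^ (S.card - (W.card + U.card))
      = (-1 : ℝ) ^ (S \ U).card * (-1 : ℝ) ^ W.card := by
    intro W hW
    rw [Finset.mem_powerset] at hW
    have h1 := Finset.card_le_card hW
    have h2 := Finset.card_le_card hUS
    have h3 : (S \ U).card = S.card - U.card := Finset.card_sdiff_of_subset hUS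
    rw [← pow_add]
    rw [show (S \ U).card + W.card = (S.card - (W.card + U.card)) + 2 * W.card by omega]
    rw [pow_add, pow_mul]
    norm_num
  rw [Finset.sum_congr rfl hc, ← Finset.mul_sum, neg_one_pow_powerset_sum]
  have : U = S ↔ S \ U = ∅ := by
    rw [Finset.sdiff_eq_empty_iff_subset]
    exact ⟨fun h => h ▸ Finset.Subset.rfl, fun h => Finset.Subset.antisymm hUS h⟩
  by_cases hE : S \ U = ∅
  · rw [if_pos hE, if_pos (this.mpr hE), hE]
    simp
  · rw [if_neg hE, if_neg (fun h => hE (this.mp h))]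
    ring

private lemma interval_sum_lo {α : Type*} [DecidableEq α] {U S : Finset α} (hUS : U ⊆ S) :
    (∑ Q ∈ S.powerset.filter (fun Q => U ⊆ Q), (-1 : ℝ) ^ (Q.card - U.card))
      = if U = S then 1 else 0 := by
  rw [reindex_sum hUS (fun n => (-1 : ℝ) ^ (n - U.card))]
  have hc : ∀ W ∈ (S \ U).powerset, (-1 : ℝ) ^ (W.card + U.card - U.card)
      = (-1 : ℝ) ^ W.card := by intro W _; congr 1; omega
  rw [Finset.sum_congr rfl hc, neg_one_pow_powerset_sum]
  have : U = S ↔ S \ U = ∅ := by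
    rw [Finset.sdiff_eq_empty_iff_subset]
    exact ⟨fun h => h ▸ Finset.Subset.rfl, fun h => Finset.Subset.antisymm hUS h⟩
  simp [this]


private lemma sum_dividend_aux {ι : Type*} [DecidableEq ι] (v : Finset ι → ℝ) (S : Finset ι) :
    ∑ T ∈ S.powerset, dividend v T = v S := by
  unfold dividend
  rw [Finset.sum_comm' (s := S.powerset) (t := fun T => T.powerset)
    (t' := S.powerset) (s' := fun U => S.powerset.filter (fun T => U ⊆ T))
    (f := fun T U => (-1 : ℝ) ^ (T.card - U.card) * v U) ?_]
  · calc ∑ U ∈ S.powerset, ∑ T ∈ S.powerset.filter (fun T => U ⊆ T),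
          (-1 : ℝ) ^ (T.card - U.card) * v U
        = ∑ U ∈ S.powerset, (if U = S then 1 else 0) * v U := by
          refine Finset.sum_congr rfl fun U hU => ?_
          rw [← Finset.sum_mul, interval_sum_lo (Finset.mem_powerset.mp hU)]
      _ = v S := by
          simp only [ite_mul, one_mul, zero_mul]
          rw [Finset.sum_ite_eq' S.powerset S v]
          simp
  · intro T U
    simp only [Finset.mem_powerset, Finset.mem_filter]
    constructor
    · rintro ⟨h1, h2⟩; exact ⟨⟨h1, h2⟩, h2.trans h1⟩
    · rintro ⟨⟨h1, h2⟩, _⟩; exact ⟨h1, h2⟩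

/-- For a CS-game `(N, v, B)` and every nonempty `R ⊆ M`,
`λ_R(v^B) = Σ λ_T(v)`, summed over all nonempty `T ⊆ N` whose set of indices of
unions met by `T` is exactly `R`. -/
theorem dividend_quotientGame {ι κ : Type*} [DecidableEq ι] [DecidableEq κ]
    (N : Finset ι) (M : Finset κ) (B : κ → Finset ι) (hCS : IsCS N M B)
    (v : Finset ι → ℝ) (hv : v ∅ = 0)
    (R : Finset κ) (hRM : R ⊆ M) (hR : R.Nonempty) :
    dividend (quotientGame v B) R =
      ∑ T ∈ N.powerset.filter
          (fun T => T.Nonempty ∧ M.filter (fun r => ((B r) ∩ T).Nonempty) = R),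
        dividend v T := by
  obtain ⟨hne, hdisj, hcover⟩ := hCS
  classical
  have hsubN : R.biUnion B ⊆ N := by
    rw [← hcover]
    exact Finset.biUnion_subset_biUnion_of_subset_left _ hRM
  set supp : Finset ι → Finset κ := fun T => R.filter (fun r => (B r ∩ T).Nonempty) with hsupp
  have hswap : dividend (quotientGame v B) R
      = ∑ T ∈ (R.biUnion B).powerset,
          ∑ Q ∈ R.powerset.filter (fun Q => T ⊆ Q.biUnion B),
            (-1 : ℝ) ^ (R.card - Q.card) * dividend v T := by
    show (∑ Q ∈ R.powerset, (-1 : ℝ) ^ (R.card - Q.card) * v (Q.biUnion B)) = _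
    calc ∑ Q ∈ R.powerset, (-1 : ℝ) ^ (R.card - Q.card) * v (Q.biUnion B)
        = ∑ Q ∈ R.powerset, ∑ T ∈ (Q.biUnion B).powerset,
            (-1 : ℝ) ^ (R.card - Q.card) * dividend v T := by
          refine Finset.sum_congr rfl fun Q hQ => ?_
          rw [← Finset.mul_sum, sum_dividend_aux]
      _ = _ := by
          refine Finset.sum_comm' fun Q T => ?_
          simp only [Finset.mem_powerset, Finset.mem_filter]
          constructor
          · rintro ⟨h1, h2⟩
            exact ⟨⟨h1, h2⟩, h2.trans (Finset.biUnion_subset_biUnion_of_subset_left _ h1)⟩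
          · rintro ⟨⟨h1, h2⟩, _⟩; exact ⟨h1, h2⟩
  have hfilter : ∀ T ∈ (R.biUnion B).powerset,
      R.powerset.filter (fun Q => T ⊆ Q.biUnion B)
        = R.powerset.filter (fun Q => supp T ⊆ Q) := by
    intro T hT
    rw [Finset.mem_powerset] at hT
    ext Q
    simp only [Finset.mem_filter, Finset.mem_powerset, and_congr_right_iff]
    intro hQR
    constructor
    · intro hTQ r hr
      simp only [hsupp, Finset.mem_filter] at hr
      obtain ⟨hrR, x, hx⟩ := hr
      rw [Finset.mem_inter] at hx
      obtain ⟨q, hqQ, hxq⟩ := Finset.mem_biUnion.mp (hTQ hx.2)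
      by_contra hrQ
      have hrq : r ≠ q := fun h => hrQ (h ▸ hqQ)
      exact Finset.disjoint_left.mp (hdisj r (hRM hrR) q (hRM (hQR hqQ)) hrq) hx.1 hxq
    · intro hsQ x hxT
      obtain ⟨r, hrR, hxr⟩ := Finset.mem_biUnion.mp (hT hxT)
      have hrs : r ∈ supp T := by
        simp only [hsupp, Finset.mem_filter]
        exact ⟨hrR, x, Finset.mem_inter.mpr ⟨hxr, hxT⟩⟩
      exact Finset.mem_biUnion.mpr ⟨r, hsQ hrs, hxr⟩
  rw [hswap, Finset.sum_congr rfl (fun T hT => by rw [hfilter T hT])]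
  have hstep : ∀ T ∈ (R.biUnion B).powerset,
      (∑ Q ∈ R.powerset.filter (fun Q => supp T ⊆ Q),
        (-1 : ℝ) ^ (R.card - Q.card) * dividend v T)
      = if supp T = R then dividend v T else 0 := by
    intro T hT
    rw [← Finset.sum_mul, interval_sum_hi (Finset.filter_subset _ _)]
    split <;> simp
  rw [Finset.sum_congr rfl hstep, ← Finset.sum_filter]
  apply Finset.sum_congr _ (fun _ _ => rfl)
  ext T
  simp only [Finset.mem_filter, Finset.mem_powerset, hsupp]
  constructor
  · rintro ⟨hTsub, hs⟩
    have hMR : M.filter (fun r => (B r ∩ T).Nonempty) = R := by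
      apply Finset.Subset.antisymm
      · intro r hr
        rw [Finset.mem_filter] at hr
        obtain ⟨hrM, x, hx⟩ := hr
        rw [Finset.mem_inter] at hx
        obtain ⟨q, hqR, hxq⟩ := Finset.mem_biUnion.mp (hTsub hx.2)
        have hrq : r = q := by
          by_contra h
          exact Finset.disjoint_left.mp (hdisj r hrM q (hRM hqR) h) hx.1 hxq
        exact hrq ▸ hqR
      · intro r hr
        rw [← hs, Finset.mem_filter] at hr
        exact Finset.mem_filter.mpr ⟨hRM hr.1, hr.2⟩
    refine ⟨hTsub.trans hsubN, ?_, hMR⟩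
    obtain ⟨r, hrR⟩ := hR
    rw [← hs] at hrR
    obtain ⟨x, hx⟩ := (Finset.mem_filter.mp hrR).2
    exact ⟨x, (Finset.mem_inter.mp hx).2⟩
  · rintro ⟨hTN, hTne, hMR⟩
    have hTsub : T ⊆ R.biUnion B := by
      intro x hxT
      have hx : x ∈ M.biUnion B := by rw [hcover]; exact hTN hxT
      obtain ⟨r, hrM, hxr⟩ := Finset.mem_biUnion.mp hx
      have hrR : r ∈ R := by
        rw [← hMR]
        exact Finset.mem_filter.mpr ⟨hrM, x, Finset.mem_inter.mpr ⟨hxr, hxT⟩⟩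
      exact Finset.mem_biUnion.mpr ⟨r, hrR, hxr⟩
    refine ⟨hTsub, ?_⟩
    apply Finset.Subset.antisymm (Finset.filter_subset _ _)
    intro r hrR
    have hr : r ∈ M.filter (fun r => (B r ∩ T).Nonempty) := by rw [hMR]; exact hrR
    exact Finset.mem_filter.mpr ⟨hrR, (Finset.mem_filter.mp hr).2⟩
end

section
/- Let (N, v, B) be a CS-game and let B_p, B_q ∈ B be two distinct unions. If B_p and B_q are highly mutually dependent in v, then B_p and B_q are mutually dependent unions in v, i.e., the indices p and q are mutually dependent players in the quotient game (M, v^B). -/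
open Finset

variable {ι κ : Type*}

lemma aux_union [DecidableEq ι] (v : Finset ι → ℝ) (N : Finset ι) (Bp Bq : Finset ι)
    (h : HighlyMD v N Bp Bq) (j0 : ι) (hj0 : j0 ∈ Bq)
    (hdisj : Disjoint Bp Bq)
    (S : Finset ι) (hSN : S ⊆ N) (hBpN : Bp ⊆ N)
    (hSp : Disjoint S Bp) (hSq : Disjoint S Bq) :
    ∀ T ⊆ Bp, v (S ∪ T) = v S := by
  intro T
  induction T using Finset.induction_on with
  | empty => simp
  | @insert i T' hiT' ih =>
    intro hsub
    have hiBp : i ∈ Bp := hsub (Finset.mem_insert_self _ _)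
    have hT' : T' ⊆ Bp := fun x hx => hsub (Finset.mem_insert_of_mem hx)
    have hST : S ∪ T' ⊆ N \ {i, j0} := by
      intro x hx
      rcases Finset.mem_union.mp hx with hxS | hxT
      · refine Finset.mem_sdiff.mpr ⟨hSN hxS, ?_⟩
        simp only [Finset.mem_insert, Finset.mem_singleton]
        rintro (rfl | rfl)
        · exact (Finset.disjoint_left.mp hSp hxS) hiBp
        · exact (Finset.disjoint_left.mp hSq hxS) hj0
      · refine Finset.mem_sdiff.mpr ⟨hBpN (hT' hxT), ?_⟩
        simp only [Finset.mem_insert, Finset.mem_singleton]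
        rintro (rfl | rfl)
        · exact hiT' hxT
        · exact (Finset.disjoint_left.mp hdisj (hT' hxT)) hj0
    have hmd := (h i hiBp j0 hj0) (S ∪ T') hST
    have : v (insert i (S ∪ T')) = v (S ∪ T') := by linarith [hmd.1]
    calc v (S ∪ insert i T') = v (insert i (S ∪ T')) := by
          rw [Finset.union_insert]
      _ = v (S ∪ T') := this
      _ = v S := ih hT'

/-- If two distinct unions `B p` and `B q` are highly mutually dependent
in `v`, then `p` and `q` are mutually dependent players in the quotient game `(M, v^B)`. -/
theorem mutDep_unions_of_highlyMD {ι κ : Type*} [DecidableEq ι] [DecidableEq κ]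
    (N : Finset ι) (M : Finset κ) (B : κ → Finset ι) (hCS : IsCS N M B)
    (v : Finset ι → ℝ) (hv : v ∅ = 0)
    (p q : κ) (hp : p ∈ M) (hq : q ∈ M) (hpq : p ≠ q)
    (h : HighlyMD v N (B p) (B q)) :
    MutDep (quotientGame v B) M p q := by
  intro R hR
  obtain ⟨hne, hdisj, hcover⟩ := hCS
  have hRM : R ⊆ M := hR.trans (Finset.sdiff_subset)
  have hpR : p ∉ R := fun hx => (Finset.mem_sdiff.mp (hR hx)).2 (by simp)
  have hqR : q ∉ R := fun hx => (Finset.mem_sdiff.mp (hR hx)).2 (by simp)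
  set S := R.biUnion B with hS
  have hSN : S ⊆ N := by
    rw [← hcover]; exact Finset.biUnion_subset_biUnion_of_subset_left _ hRM
  have hBpN : B p ⊆ N := by
    rw [← hcover]; intro x hx; exact Finset.mem_biUnion.mpr ⟨p, hp, hx⟩
  have hBqN : B q ⊆ N := by
    rw [← hcover]; intro x hx; exact Finset.mem_biUnion.mpr ⟨q, hq, hx⟩
  have hSp : Disjoint S (B p) := by
    refine Finset.disjoint_biUnion_left _ _ _ |>.mpr ?_
    intro r hr; exact hdisj r (hRM hr) p hp (fun e => hpR (e ▸ hr))
  have hSq : Disjoint S (B q) := by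
    refine Finset.disjoint_biUnion_left _ _ _ |>.mpr ?_
    intro r hr; exact hdisj r (hRM hr) q hq (fun e => hqR (e ▸ hr))
  have hBpq : Disjoint (B p) (B q) := hdisj p hp q hq hpq
  obtain ⟨j0, hj0⟩ := hne q hq
  obtain ⟨i0, hi0⟩ := hne p hp
  have h' : HighlyMD v N (B q) (B p) := by
    intro j hj i hi S hSsub
    have hS2 : S ⊆ N \ {i, j} := by
      intro x hx; have := hSsub hx
      simp only [Finset.mem_sdiff, Finset.mem_insert, Finset.mem_singleton] at this ⊢
      tauto
    have := h i hi j hj S hS2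
    exact ⟨this.2, this.1⟩
  have hquot : ∀ s ∈ ({p, q} : Finset κ), quotientGame v B (insert s R) - quotientGame v B R = 0 := by
    intro s hs
    simp only [quotientGame, Finset.biUnion_insert]
    rw [Finset.union_comm]
    rcases Finset.mem_insert.mp hs with rfl | hs
    · rw [aux_union v N (B s) (B q) h j0 hj0 hBpq S hSN hBpN hSp hSq (B s) le_rfl]
      ring
    · rw [Finset.mem_singleton] at hs
      subst hs
      rw [aux_union v N (B s) (B p) h' i0 hi0 hBpq.symm S hSN hBqN hSq hSp (B s) le_rfl]
      ring
  exact ⟨hquot p (by simp), hquot q (by simp)⟩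
end

section
/- The Owen value satisfies invariance across games: for every pair of union-wise mutually dependent CS-games (N, v, B) and (N, w, B) and every union B_l ∈ B, if every player of B_l has the same productive identity in v and w (i.e., is a null player in both games or a non-null player in both games) and all non-null players of B_l are pairwise mutually dependent in both v and w, then Ow_i(N, v, B) = Ow_i(N, w, B) for every i ∈ B_l. -/
open Finset

variable {ι κ : Type*}

/-- Two CS-games `(N, v, B)` and `(N, w, B)` with `v(N) = w(N)` are union-wise mutually
dependent: every union is a null union in both games or a non-null union in both, and
all non-null unions are pairwise mutually dependent unions in both games. -/
def UnionwiseMD [DecidableEq ι] [DecidableEq κ] (N : Finset ι) (M : Finset κ)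
    (B : κ → Finset ι) (v w : Finset ι → ℝ) : Prop :=
  v N = w N ∧
  (∀ p ∈ M, (NullPlayer (quotientGame v B) M p ↔ NullPlayer (quotientGame w B) M p)) ∧
  (∀ p ∈ M, ∀ q ∈ M, p ≠ q →
    ¬ NullPlayer (quotientGame v B) M p → ¬ NullPlayer (quotientGame v B) M q →
    MutDep (quotientGame v B) M p q ∧ MutDep (quotientGame w B) M p q)

lemma neg_one_pow_powerset_sum_s10 [DecidableEq ι] (A : Finset ι) :
    ∑ W ∈ A.powerset, (-1 : ℝ) ^ W.card = if A = ∅ then 1 else 0 := by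
  have h := @Finset.sum_powerset_neg_one_pow_card ι _ A
  calc ∑ W ∈ A.powerset, (-1:ℝ)^W.card
      = ((∑ W ∈ A.powerset, (-1:ℤ)^W.card : ℤ) : ℝ) := by push_cast; rfl
    _ = _ := by rw [h]; split <;> norm_num

lemma neg_one_pow_powerset_sum' [DecidableEq ι] (A : Finset ι) :
    ∑ W ∈ A.powerset, (-1 : ℝ) ^ (A.card - W.card) = if A = ∅ then 1 else 0 := by
  have key : ∀ W ∈ A.powerset, (-1:ℝ)^(A.card - W.card) = (-1)^A.card * (-1)^W.card := by
    intro W hW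
    have hb : W.card ≤ A.card := Finset.card_le_card (Finset.mem_powerset.mp hW)
    have : A.card + W.card = (A.card - W.card) + 2 * W.card := by omega
    have h2 : (-1:ℝ)^A.card * (-1)^W.card = (-1)^(A.card - W.card) * ((-1)^(2*W.card)) := by
      rw [← pow_add, ← pow_add, this]
    rw [h2, pow_mul]; norm_num
  rw [Finset.sum_congr rfl key, ← Finset.mul_sum, neg_one_pow_powerset_sum_s10]
  split
  · next h => subst h; simp
  · simp

lemma sum_interval_reindex [DecidableEq ι] {U T : Finset ι} (hUT : U ⊆ T) (f : ℕ → ℝ) :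
    ∑ S ∈ T.powerset.filter (fun S => U ⊆ S), f S.card
      = ∑ W ∈ (T \ U).powerset, f (W.card + U.card) := by
  refine Finset.sum_nbij' (fun S => S \ U) (fun W => W ∪ U) ?_ ?_ ?_ ?_ ?_
  · intro S hS
    rw [Finset.mem_filter, Finset.mem_powerset] at hS
    exact Finset.mem_powerset.mpr (Finset.sdiff_subset_sdiff hS.1 subset_rfl)
  · intro W hW
    rw [Finset.mem_powerset] at hW
    rw [Finset.mem_filter, Finset.mem_powerset]
    exact ⟨Finset.union_subset (hW.trans (Finset.sdiff_subset)) hUT, Finset.subset_union_right⟩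
  · intro S hS
    rw [Finset.mem_filter] at hS
    exact Finset.sdiff_union_of_subset hS.2
  · intro W hW
    rw [Finset.mem_powerset] at hW
    have hd : Disjoint W U := Finset.disjoint_of_subset_left hW Finset.sdiff_disjoint
    show (W ∪ U) \ U = W
    rw [Finset.union_sdiff_right, Finset.sdiff_eq_self_of_disjoint hd]
  · intro S hS
    rw [Finset.mem_filter, Finset.mem_powerset] at hS
    show f S.card = f ((S \ U).card + U.card)
    congr 1
    have h1 : (S \ U).card = S.card - U.card := Finset.card_sdiff_of_subset hS.2
    have h2 : U.card ≤ S.card := Finset.card_le_card hS.2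
    omega

lemma alt_interval₁ [DecidableEq ι] (U T : Finset ι) :
    ∑ S ∈ T.powerset.filter (fun S => U ⊆ S), (-1 : ℝ) ^ (T.card - S.card)
      = if U = T then 1 else 0 := by
  by_cases hUT : U ⊆ T
  · rw [sum_interval_reindex hUT (fun n => (-1:ℝ)^(T.card - n))]
    have hc : (T \ U).card = T.card - U.card := Finset.card_sdiff_of_subset hUT
    have hU : U.card ≤ T.card := Finset.card_le_card hUT
    have key : ∀ W ∈ (T \ U).powerset, (-1:ℝ)^(T.card - (W.card + U.card))
        = (-1:ℝ)^((T \ U).card - W.card) := by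
      intro W hW
      have := Finset.card_le_card (Finset.mem_powerset.mp hW)
      congr 1; omega
    rw [Finset.sum_congr rfl key, neg_one_pow_powerset_sum']
    have : T \ U = ∅ ↔ U = T := by
      rw [Finset.sdiff_eq_empty_iff_subset]
      exact ⟨fun h => Finset.Subset.antisymm hUT h, fun h => h ▸ subset_rfl⟩
    simp only [this]
  · have h1 : T.powerset.filter (fun S => U ⊆ S) = ∅ := by
      rw [Finset.filter_eq_empty_iff]
      intro S hS hUS
      exact hUT (hUS.trans (Finset.mem_powerset.mp hS))
    rw [h1, Finset.sum_empty, if_neg (fun h => hUT (le_of_eq h))]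

lemma alt_interval₂ [DecidableEq ι] (U T : Finset ι) :
    ∑ S ∈ T.powerset.filter (fun S => U ⊆ S), (-1 : ℝ) ^ (S.card - U.card)
      = if U = T then 1 else 0 := by
  by_cases hUT : U ⊆ T
  · rw [sum_interval_reindex hUT (fun n => (-1:ℝ)^(n - U.card))]
    have key : ∀ W ∈ (T \ U).powerset, (-1:ℝ)^((W.card + U.card) - U.card)
        = (-1:ℝ)^W.card := by intro W _; congr 1; omega
    rw [Finset.sum_congr rfl key, neg_one_pow_powerset_sum_s10]
    have : T \ U = ∅ ↔ U = T := by
      rw [Finset.sdiff_eq_empty_iff_subset]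
      exact ⟨fun h => Finset.Subset.antisymm hUT h, fun h => h ▸ subset_rfl⟩
    simp only [this]
  · have h1 : T.powerset.filter (fun S => U ⊆ S) = ∅ := by
      rw [Finset.filter_eq_empty_iff]
      intro S hS hUS
      exact hUT (hUS.trans (Finset.mem_powerset.mp hS))
    rw [h1, Finset.sum_empty, if_neg (fun h => hUT (le_of_eq h))]

lemma sum_dividend [DecidableEq ι] (v : Finset ι → ℝ) (T : Finset ι) :
    ∑ S ∈ T.powerset, dividend v S = v T := by
  unfold dividend
  calc ∑ S ∈ T.powerset, ∑ U ∈ S.powerset, (-1:ℝ)^(S.card - U.card) * v U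
      = ∑ S ∈ T.powerset, ∑ U ∈ T.powerset,
          (if U ⊆ S then (-1:ℝ)^(S.card - U.card) * v U else 0) := by
        refine Finset.sum_congr rfl fun S hS => ?_
        rw [← Finset.sum_filter]
        refine Finset.sum_congr ?_ (fun _ _ => rfl)
        ext U
        simp only [Finset.mem_powerset, Finset.mem_filter]
        exact ⟨fun h => ⟨h.trans (Finset.mem_powerset.mp hS), h⟩, fun h => h.2⟩
    _ = ∑ U ∈ T.powerset, ∑ S ∈ T.powerset,
          (if U ⊆ S then (-1:ℝ)^(S.card - U.card) * v U else 0) := Finset.sum_comm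
    _ = ∑ U ∈ T.powerset,
          (∑ S ∈ T.powerset.filter (fun S => U ⊆ S), (-1:ℝ)^(S.card - U.card)) * v U := by
        refine Finset.sum_congr rfl fun U hU => ?_
        rw [Finset.sum_filter, Finset.sum_mul]
        refine Finset.sum_congr rfl fun S _ => ?_
        split <;> simp
    _ = ∑ U ∈ T.powerset, (if U = T then 1 else 0) * v U := by
        refine Finset.sum_congr rfl fun U _ => ?_
        rw [alt_interval₂]
    _ = v T := by
        rw [Finset.sum_congr rfl (fun U _ => by rw [ite_mul, one_mul, zero_mul]),
          Finset.sum_ite_eq' T.powerset T v]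
        simp

lemma dividend_eq_zero_of_insert [DecidableEq ι] (v : Finset ι → ℝ) {T : Finset ι} {i : ι}
    (hi : i ∈ T) (h : ∀ S ⊆ T.erase i, v (insert i S) = v S) : dividend v T = 0 := by
  have hiT' : i ∉ T.erase i := Finset.notMem_erase i T
  have hT : T = insert i (T.erase i) := (Finset.insert_erase hi).symm
  rw [dividend, hT, Finset.sum_powerset_insert hiT', ← Finset.sum_add_distrib]
  refine Finset.sum_eq_zero fun S hS => ?_
  have hS' : S ⊆ T.erase i := Finset.mem_powerset.mp hS
  have hiS : i ∉ S := fun hmem => hiT' (hS' hmem)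
  rw [h S hS', Finset.card_insert_of_notMem hiT', Finset.card_insert_of_notMem hiS]
  have hc : S.card ≤ (T.erase i).card := Finset.card_le_card hS'
  have e1 : (T.erase i).card + 1 - S.card = ((T.erase i).card - S.card) + 1 := by omega
  have e2 : (T.erase i).card + 1 - (S.card + 1) = (T.erase i).card - S.card := by omega
  rw [e1, e2, pow_succ]
  ring

lemma dividend_eq_zero_of_null [DecidableEq ι] {v : Finset ι → ℝ} {N T : Finset ι} {i : ι}
    (hn : NullPlayer v N i) (hT : T ⊆ N) (hi : i ∈ T) : dividend v T = 0 := by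
  refine dividend_eq_zero_of_insert v hi fun S hS => hn S fun t ht => ?_
  have h1 := hS ht
  rw [Finset.mem_sdiff, Finset.mem_singleton]
  exact ⟨hT (Finset.mem_of_mem_erase h1), Finset.ne_of_mem_erase h1⟩

lemma subset_sdiff_pair [DecidableEq ι] {N T S : Finset ι} {a b : ι}
    (hT : T ⊆ N) (hS : S ⊆ T.erase a) (hb : b ∉ T) : S ⊆ N \ {a, b} := by
  intro t ht
  have h1 := hS ht
  have htT : t ∈ T := Finset.mem_of_mem_erase h1
  rw [Finset.mem_sdiff, Finset.mem_insert, Finset.mem_singleton]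
  exact ⟨hT htT, by push_neg; exact ⟨Finset.ne_of_mem_erase h1, fun he => hb (he ▸ htT)⟩⟩

lemma dividend_eq_zero_of_mutDep_left [DecidableEq ι] {v : Finset ι → ℝ} {N T : Finset ι}
    {i j : ι} (hm : MutDep v N i j) (hT : T ⊆ N) (hi : i ∈ T) (hj : j ∉ T) :
    dividend v T = 0 :=
  dividend_eq_zero_of_insert v hi fun S hS =>
    sub_eq_zero.mp (hm S (subset_sdiff_pair hT hS hj)).1

lemma dividend_eq_zero_of_mutDep_right [DecidableEq ι] {v : Finset ι → ℝ} {N T : Finset ι}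
    {i j : ι} (hm : MutDep v N i j) (hT : T ⊆ N) (hj : j ∈ T) (hi : i ∉ T) :
    dividend v T = 0 :=
  dividend_eq_zero_of_insert v hj fun S hS =>
    sub_eq_zero.mp (hm S (by
      intro t ht
      have h1 := hS ht
      have htT : t ∈ T := Finset.mem_of_mem_erase h1
      rw [Finset.mem_sdiff, Finset.mem_insert, Finset.mem_singleton]
      refine ⟨hT htT, ?_⟩
      push_neg
      exact ⟨fun he => hi (he ▸ htT), Finset.ne_of_mem_erase h1⟩)).2

/-- The set of unions touched by `T`. -/
def touch [DecidableEq ι] (M : Finset κ) (B : κ → Finset ι) (T : Finset ι) : Finset κ :=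
  M.filter (fun q => (B q ∩ T).Nonempty)

lemma touch_subset_iff [DecidableEq ι] [DecidableEq κ] {N : Finset ι} {M : Finset κ}
    {B : κ → Finset ι} (hCS : IsCS N M B) {T : Finset ι} (hT : T ⊆ N) {S : Finset κ}
    (hS : S ⊆ M) : T ⊆ S.biUnion B ↔ touch M B T ⊆ S := by
  obtain ⟨-, hdisj, hcover⟩ := hCS
  constructor
  · intro h q hq
    rw [touch, Finset.mem_filter] at hq
    obtain ⟨hqM, t, ht⟩ := hq
    rw [Finset.mem_inter] at ht
    obtain ⟨p, hpS, hpB⟩ := Finset.mem_biUnion.mp (h ht.2)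
    by_contra hqS
    have hne : q ≠ p := fun he => hqS (he ▸ hpS)
    exact Finset.disjoint_left.mp (hdisj q hqM p (hS hpS) hne) ht.1 hpB
  · intro h t ht
    have : t ∈ M.biUnion B := hcover ▸ hT ht
    obtain ⟨q, hqM, hqB⟩ := Finset.mem_biUnion.mp this
    have hq : q ∈ touch M B T := by
      rw [touch, Finset.mem_filter]
      exact ⟨hqM, ⟨t, Finset.mem_inter.mpr ⟨hqB, ht⟩⟩⟩
    exact Finset.mem_biUnion.mpr ⟨q, h hq, hqB⟩

lemma dividend_quotient [DecidableEq ι] [DecidableEq κ] {N : Finset ι} {M : Finset κ}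
    {B : κ → Finset ι} (hCS : IsCS N M B) (v : Finset ι → ℝ) {R : Finset κ} (hR : R ⊆ M) :
    dividend (quotientGame v B) R
      = ∑ T ∈ N.powerset.filter (fun T => touch M B T = R), dividend v T := by
  have hcover := hCS.2.2
  calc dividend (quotientGame v B) R
      = ∑ S ∈ R.powerset, (-1:ℝ)^(R.card - S.card)
          * ∑ T ∈ (S.biUnion B).powerset, dividend v T := by
        rw [dividend]
        refine Finset.sum_congr rfl fun S _ => ?_
        rw [sum_dividend]
        rfl
    _ = ∑ S ∈ R.powerset, ∑ T ∈ N.powerset,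
          (if touch M B T ⊆ S then (-1:ℝ)^(R.card - S.card) * dividend v T else 0) := by
        refine Finset.sum_congr rfl fun S hS => ?_
        have hSM : S ⊆ M := (Finset.mem_powerset.mp hS).trans hR
        rw [Finset.mul_sum, ← Finset.sum_filter]
        refine Finset.sum_congr ?_ (fun _ _ => rfl)
        ext T
        simp only [Finset.mem_powerset, Finset.mem_filter]
        constructor
        · intro hTS
          have hTN : T ⊆ N := hTS.trans (by
            rw [← hcover]
            exact Finset.biUnion_subset_biUnion_of_subset_left B hSM)
          exact ⟨hTN, (touch_subset_iff hCS hTN hSM).mp hTS⟩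
        · rintro ⟨hTN, htouch⟩
          exact (touch_subset_iff hCS hTN hSM).mpr htouch
    _ = ∑ T ∈ N.powerset,
          (∑ S ∈ R.powerset.filter (fun S => touch M B T ⊆ S), (-1:ℝ)^(R.card - S.card))
            * dividend v T := by
        rw [Finset.sum_comm]
        refine Finset.sum_congr rfl fun T _ => ?_
        rw [Finset.sum_filter, Finset.sum_mul]
        exact Finset.sum_congr rfl fun S _ => by split <;> simp
    _ = ∑ T ∈ N.powerset, (if touch M B T = R then 1 else 0) * dividend v T := by
        refine Finset.sum_congr rfl fun T _ => ?_
        rw [alt_interval₁]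
    _ = ∑ T ∈ N.powerset.filter (fun T => touch M B T = R), dividend v T := by
        rw [Finset.sum_filter]
        exact Finset.sum_congr rfl fun T _ => by split <;> simp

lemma owen_formula [DecidableEq ι] [DecidableEq κ] {N : Finset ι} {M : Finset κ}
    {B : κ → Finset ι} (hCS : IsCS N M B) (u : Finset ι → ℝ) (hu : u ∅ = 0)
    {l : κ} (hl : l ∈ M) {i : ι} (hiB : i ∈ B l)
    (D : Finset ι) (hDB : D ⊆ B l) (hiD : i ∈ D)
    (hnullD : ∀ j ∈ B l, j ∉ D → NullPlayer u N j)
    (hmdD : ∀ j ∈ D, j ≠ i → MutDep u N i j)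
    (E : Finset κ) (hEM : E ⊆ M)
    (hnullE : ∀ p ∈ M, p ∉ E → NullPlayer (quotientGame u B) M p)
    (hmdE : ∀ p ∈ E, ∀ q ∈ E, p ≠ q → MutDep (quotientGame u B) M p q) :
    Owen u N M B l i = if l ∈ E then u N / ((D.card : ℝ) * (E.card : ℝ)) else 0 := by
  -- Step 1: re-index the Owen sum over coalitions meeting `B l`.
  have step1 : Owen u N M B l i
      = ∑ T ∈ N.powerset.filter (fun T => (B l ∩ T).Nonempty),
          dividend u T / ((D.card : ℝ) * ((touch M B T).card : ℝ)) := by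
    rw [Owen, Finset.sum_filter, Finset.sum_filter]
    refine Finset.sum_congr rfl fun T hT => ?_
    have hTN : T ⊆ N := Finset.mem_powerset.mp hT
    by_cases hdiv : dividend u T = 0
    · simp [hdiv]
    by_cases hiT : i ∈ T
    · have hBT : B l ∩ T = D := by
        apply Finset.Subset.antisymm
        · intro j hj
          rw [Finset.mem_inter] at hj
          by_contra hjD
          exact hdiv (dividend_eq_zero_of_null (hnullD j hj.1 hjD) hTN hj.2)
        · intro j hjD
          by_contra hjT'
          have hjT : j ∉ T := fun h => hjT' (Finset.mem_inter.mpr ⟨hDB hjD, h⟩)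
          have hij : j ≠ i := fun h => hjT (h ▸ hiT)
          exact hdiv (dividend_eq_zero_of_mutDep_left (hmdD j hjD hij) hTN hiT hjT)
      have hne : (B l ∩ T).Nonempty := ⟨i, Finset.mem_inter.mpr ⟨hiB, hiT⟩⟩
      rw [if_pos hiT, if_pos hne, hBT, touch]
    · have hne : ¬ (B l ∩ T).Nonempty := by
        rintro ⟨j, hj⟩
        rw [Finset.mem_inter] at hj
        by_cases hjD : j ∈ D
        · have hij : j ≠ i := fun h => hiT (h ▸ hj.2)
          exact hdiv (dividend_eq_zero_of_mutDep_right (hmdD j hjD hij) hTN hj.2 hiT)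
        · exact hdiv (dividend_eq_zero_of_null (hnullD j hj.1 hjD) hTN hj.2)
      rw [if_neg hiT, if_neg hne]
  -- Step 2: group by the set of touched unions.
  have step2 : Owen u N M B l i
      = ∑ R ∈ M.powerset.filter (fun R => l ∈ R),
          dividend (quotientGame u B) R / ((D.card : ℝ) * (R.card : ℝ)) := by
    rw [step1]
    rw [← Finset.sum_fiberwise_of_maps_to (g := touch M B)
      (t := M.powerset.filter (fun R => l ∈ R)) (fun T hT => by
        rw [Finset.mem_filter] at hT
        rw [Finset.mem_filter, Finset.mem_powerset]
        exact ⟨Finset.filter_subset _ _, by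
          rw [touch, Finset.mem_filter]; exact ⟨hl, hT.2⟩⟩)]
    refine Finset.sum_congr rfl fun R hR => ?_
    rw [Finset.mem_filter] at hR
    have hRM : R ⊆ M := Finset.mem_powerset.mp hR.1
    have hfib : (N.powerset.filter (fun T => (B l ∩ T).Nonempty)).filter
        (fun T => touch M B T = R) = N.powerset.filter (fun T => touch M B T = R) := by
      rw [Finset.filter_filter]
      refine Finset.filter_congr fun T _ => ?_
      constructor
      · exact fun h => h.2
      · intro h
        refine ⟨?_, h⟩
        have : l ∈ touch M B T := h ▸ hR.2
        rw [touch, Finset.mem_filter] at this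
        exact this.2
    rw [hfib]
    have hcongr : ∀ T ∈ N.powerset.filter (fun T => touch M B T = R),
        dividend u T / ((D.card : ℝ) * ((touch M B T).card : ℝ))
          = dividend u T / ((D.card : ℝ) * (R.card : ℝ)) := fun T hT => by
      rw [(Finset.mem_filter.mp hT).2]
    rw [Finset.sum_congr rfl hcongr, ← Finset.sum_div, dividend_quotient hCS u hRM]
  -- Step 3: all dividends of the quotient game vanish except at `E`.
  have hzero : ∀ R ⊆ M, R ≠ E → dividend (quotientGame u B) R = 0 := by
    intro R hRM hRE
    by_cases hex : ∃ p ∈ R, p ∉ E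
    · obtain ⟨p, hpR, hpE⟩ := hex
      exact dividend_eq_zero_of_null (hnullE p (hRM hpR) hpE) hRM hpR
    · push_neg at hex
      have : ∃ q ∈ E, q ∉ R := by
        by_contra h
        push_neg at h
        exact hRE (Finset.Subset.antisymm hex h)
      obtain ⟨q, hqE, hqR⟩ := this
      rcases R.eq_empty_or_nonempty with h | ⟨p, hpR⟩
      · subst h
        simp [dividend, quotientGame, hu]
      · have hpq : p ≠ q := fun h => hqR (h ▸ hpR)
        exact dividend_eq_zero_of_mutDep_left (hmdE p (hex p hpR) q hqE hpq) hRM hpR hqR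
  have huN : dividend (quotientGame u B) E = u N := by
    have hQM : quotientGame u B M = u N := by rw [quotientGame, hCS.2.2]
    rw [← hQM, ← sum_dividend (quotientGame u B) M]
    exact (Finset.sum_eq_single_of_mem E (Finset.mem_powerset.mpr hEM)
      (fun R hR hne => hzero R (Finset.mem_powerset.mp hR) hne)).symm
  rw [step2]
  by_cases hlE : l ∈ E
  · rw [if_pos hlE]
    rw [Finset.sum_eq_single_of_mem E (by
        rw [Finset.mem_filter, Finset.mem_powerset]; exact ⟨hEM, hlE⟩)
      (fun R hR hne => by
        rw [Finset.mem_filter, Finset.mem_powerset] at hR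
        rw [hzero R hR.1 hne, zero_div])]
    rw [huN]
  · rw [if_neg hlE]
    refine Finset.sum_eq_zero fun R hR => ?_
    rw [Finset.mem_filter, Finset.mem_powerset] at hR
    have hne : R ≠ E := fun h => hlE (h ▸ hR.2)
    rw [hzero R hR.1 hne, zero_div]

/-- The Owen value satisfies invariance across games. -/
theorem owen_IAG {ι κ : Type*} [DecidableEq ι] [DecidableEq κ]
    (N : Finset ι) (M : Finset κ) (B : κ → Finset ι) (hCS : IsCS N M B)
    (v w : Finset ι → ℝ) (hv : v ∅ = 0) (hw : w ∅ = 0)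
    (hUW : UnionwiseMD N M B v w)
    (l : κ) (hl : l ∈ M)
    (hident : ∀ i ∈ B l, (NullPlayer v N i ↔ NullPlayer w N i))
    (hmd : ∀ i ∈ B l, ∀ j ∈ B l, i ≠ j → ¬ NullPlayer v N i → ¬ NullPlayer v N j →
      MutDep v N i j ∧ MutDep w N i j) :
    ∀ i ∈ B l, Owen v N M B l i = Owen w N M B l i := by
  intro i hiB
  classical
  obtain ⟨hvw, hiffE, hmdU⟩ := hUW
  by_cases hni : NullPlayer v N i
  · have hz : ∀ (u : Finset ι → ℝ), NullPlayer u N i → Owen u N M B l i = 0 := by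
      intro u hn
      rw [Owen]
      refine Finset.sum_eq_zero fun T hT => ?_
      rw [Finset.mem_filter, Finset.mem_powerset] at hT
      rw [dividend_eq_zero_of_null hn hT.1 hT.2, zero_div]
    rw [hz v hni, hz w ((hident i hiB).mp hni)]
  · set D : Finset ι := (B l).filter (fun j => ¬ NullPlayer v N j) with hD
    set E : Finset κ := M.filter (fun p => ¬ NullPlayer (quotientGame v B) M p) with hE
    have hiD : i ∈ D := Finset.mem_filter.mpr ⟨hiB, hni⟩
    have hnullD_v : ∀ j ∈ B l, j ∉ D → NullPlayer v N j := fun j hj hjD => by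
      by_contra h; exact hjD (Finset.mem_filter.mpr ⟨hj, h⟩)
    have hnullD_w : ∀ j ∈ B l, j ∉ D → NullPlayer w N j := fun j hj hjD =>
      (hident j hj).mp (hnullD_v j hj hjD)
    have hjnn : ∀ j ∈ D, ¬ NullPlayer v N j := fun j hj => (Finset.mem_filter.mp hj).2
    have hjB : ∀ j ∈ D, j ∈ B l := fun j hj => (Finset.mem_filter.mp hj).1
    have hmdD_v : ∀ j ∈ D, j ≠ i → MutDep v N i j := fun j hj hij =>
      (hmd i hiB j (hjB j hj) hij.symm hni (hjnn j hj)).1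
    have hmdD_w : ∀ j ∈ D, j ≠ i → MutDep w N i j := fun j hj hij =>
      (hmd i hiB j (hjB j hj) hij.symm hni (hjnn j hj)).2
    have hnullE_v : ∀ p ∈ M, p ∉ E → NullPlayer (quotientGame v B) M p := fun p hp hpE => by
      by_contra h; exact hpE (Finset.mem_filter.mpr ⟨hp, h⟩)
    have hnullE_w : ∀ p ∈ M, p ∉ E → NullPlayer (quotientGame w B) M p := fun p hp hpE =>
      (hiffE p hp).mp (hnullE_v p hp hpE)
    have hEmem : ∀ p ∈ E, p ∈ M ∧ ¬ NullPlayer (quotientGame v B) M p := fun p hp =>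
      Finset.mem_filter.mp hp
    have hmdE_v : ∀ p ∈ E, ∀ q ∈ E, p ≠ q → MutDep (quotientGame v B) M p q :=
      fun p hp q hq hpq =>
        (hmdU p (hEmem p hp).1 q (hEmem q hq).1 hpq (hEmem p hp).2 (hEmem q hq).2).1
    have hmdE_w : ∀ p ∈ E, ∀ q ∈ E, p ≠ q → MutDep (quotientGame w B) M p q :=
      fun p hp q hq hpq =>
        (hmdU p (hEmem p hp).1 q (hEmem q hq).1 hpq (hEmem p hp).2 (hEmem q hq).2).2
    rw [owen_formula hCS v hv hl hiB D (Finset.filter_subset _ _) hiD hnullD_v hmdD_v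
        E (Finset.filter_subset _ _) hnullE_v hmdE_v,
      owen_formula hCS w hw hl hiB D (Finset.filter_subset _ _) hiD hnullD_w hmdD_w
        E (Finset.filter_subset _ _) hnullE_w hmdE_w,
      hvw]
end

section
/- The Owen value satisfies null player out: for every CS-game (N, v, B), if i ∈ N is a null player in v, then Ow_j(N, v, B) = Ow_j(N \ {i}, v restricted to subsets of N \ {i}, B restricted to N \ {i}) for every j ∈ N \ {i}. -/
open Finset

variable {ι κ : Type*}

lemma dividend_null {ι : Type*} [DecidableEq ι] (v : Finset ι → ℝ) (N : Finset ι) (i : ι)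
    (hnull : NullPlayer v N i) (T : Finset ι) (hT : T ⊆ N) (hiT : i ∈ T) :
    dividend v T = 0 := by
  have his : i ∉ T.erase i := notMem_erase i T
  have hTe : T = insert i (T.erase i) := (insert_erase hiT).symm
  unfold dividend
  rw [hTe, Finset.sum_powerset_insert his, ← Finset.sum_add_distrib]
  apply Finset.sum_eq_zero
  intro S hS
  have hSs : S ⊆ T.erase i := mem_powerset.mp hS
  have hiS : i ∉ S := fun h => his (hSs h)
  have hvS : v (insert i S) = v S := by
    apply hnull
    intro x hx
    have := hSs hx
    rw [mem_erase] at this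
    rw [mem_sdiff, mem_singleton]
    exact ⟨hT this.2, this.1⟩
  have hc1 : (insert i (T.erase i)).card = (T.erase i).card + 1 :=
    card_insert_of_notMem his
  have hc2 : (insert i S).card = S.card + 1 := card_insert_of_notMem hiS
  have hle : S.card ≤ (T.erase i).card := card_le_card hSs
  have h1 : (T.erase i).card + 1 - S.card = ((T.erase i).card - S.card) + 1 :=
    Nat.succ_sub hle
  rw [hvS, hc1, hc2, h1, Nat.add_sub_add_right, pow_succ]
  ring

/-- The Owen value satisfies null player out: if `i` is a null player
in `v`, then every other player receives the same Owen value in the CS-game obtained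
by deleting `i` (restricting the unions to `N \ {i}` and dropping emptied unions). -/
theorem owen_NPO {ι κ : Type*} [DecidableEq ι] [DecidableEq κ]
    (N : Finset ι) (M : Finset κ) (B : κ → Finset ι) (hCS : IsCS N M B)
    (v : Finset ι → ℝ) (hv : v ∅ = 0)
    (i : ι) (hi : i ∈ N) (hnull : NullPlayer v N i)
    (p : κ) (hp : p ∈ M) (j : ι) (hj : j ∈ B p) (hji : j ≠ i) :
    Owen v N M B p j =
      Owen v (N \ {i}) (M.filter (fun q => ((B q) ∩ (N \ {i})).Nonempty))
        (fun q => (B q) ∩ (N \ {i})) p j := by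
  rw [Owen, Owen]
  have hsub : (N \ {i}).powerset.filter (fun T => j ∈ T) ⊆
      N.powerset.filter (fun T => j ∈ T) := by
    apply filter_subset_filter
    exact powerset_mono.mpr (sdiff_subset)
  rw [← Finset.sum_subset hsub ?hz]
  case hz =>
    intro T hT hT2
    simp only [mem_filter, mem_powerset] at hT hT2
    have hiT : i ∈ T := by
      by_contra hni
      apply hT2
      refine ⟨fun x hx => ?_, hT.2⟩
      rw [mem_sdiff, mem_singleton]
      exact ⟨hT.1 hx, fun h => hni (h ▸ hx)⟩
    rw [dividend_null v N i hnull T hT.1 hiT, zero_div]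
  apply Finset.sum_congr rfl
  intro T hT
  simp only [mem_filter, mem_powerset] at hT
  have hTsub : T ⊆ N \ {i} := hT.1
  have hTr : (N \ {i}) ∩ T = T := inter_eq_right.mpr hTsub
  have h1 : ∀ q, B q ∩ (N \ {i}) ∩ T = B q ∩ T := fun q => by
    rw [inter_assoc, hTr]
  rw [h1 p]
  congr 3
  rw [filter_filter]
  congr 1
  symm
  apply filter_congr
  intro q _
  simp only [h1 q]
  constructor
  · rintro ⟨_, h⟩; exact h
  · intro h
    refine ⟨?_, h⟩
    obtain ⟨x, hx⟩ := h
    rw [mem_inter] at hx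
    exact ⟨x, mem_inter.mpr ⟨hx.1, hTsub hx.2⟩⟩
end

section
/- The Owen value satisfies differential marginality of mutually dependent players within unions: for any two CS-games (N, v, B) and (N, w, B) with the same coalition structure and any two players i, j belonging to the same union B_k ∈ B, if i and j are mutually dependent players in the difference game v − w, then Ow_i(N, v, B) − Ow_j(N, v, B) = Ow_i(N, w, B) − Ow_j(N, w, B). -/
open Finset

variable {ι κ : Type*}

lemma dividend_sub [DecidableEq ι] (v w : Finset ι → ℝ) (T : Finset ι) :
    dividend (fun S => v S - w S) T = dividend v T - dividend w T := by
  simp [dividend, mul_sub, Finset.sum_sub_distrib]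

lemma dividend_null_s13 [DecidableEq ι] (u : Finset ι → ℝ) (T : Finset ι) (i : ι) (hi : i ∈ T)
    (h : ∀ S ⊆ T.erase i, u (insert i S) = u S) : dividend u T = 0 := by
  have hni : i ∉ T.erase i := Finset.notMem_erase i T
  have hT : insert i (T.erase i) = T := Finset.insert_erase hi
  rw [dividend, ← hT, Finset.sum_powerset_insert hni]
  rw [← Finset.sum_add_distrib]
  apply Finset.sum_eq_zero
  intro S hS
  rw [Finset.mem_powerset] at hS
  have hiS : i ∉ S := fun hmem => hni (hS hmem)
  have hcard : (insert i (T.erase i)).card = (T.erase i).card + 1 :=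
    Finset.card_insert_of_notMem hni
  have hcardS : (insert i S).card = S.card + 1 := Finset.card_insert_of_notMem hiS
  have hle : S.card ≤ (T.erase i).card := Finset.card_le_card hS
  rw [h S hS, hcard, hcardS]
  have : (T.erase i).card + 1 - (S.card + 1) = (T.erase i).card - S.card := by omega
  rw [this]
  have h2 : (T.erase i).card + 1 - S.card = ((T.erase i).card - S.card) + 1 := by omega
  rw [h2, pow_succ]
  ring

/-- The Owen value satisfies differential marginality of mutually
dependent players within unions. -/
theorem owen_UDMmd {ι κ : Type*} [DecidableEq ι] [DecidableEq κ]
    (N : Finset ι) (M : Finset κ) (B : κ → Finset ι) (hCS : IsCS N M B)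
    (v w : Finset ι → ℝ) (hv : v ∅ = 0) (hw : w ∅ = 0)
    (k : κ) (hk : k ∈ M) (i j : ι) (hi : i ∈ B k) (hj : j ∈ B k)
    (hmd : MutDep (fun S => v S - w S) N i j) :
    Owen v N M B k i - Owen v N M B k j = Owen w N M B k i - Owen w N M B k j := by
  set u : Finset ι → ℝ := fun S => v S - w S with hu
  have hdiv : ∀ T ⊆ N, (i ∈ T → j ∉ T) ∨ (j ∈ T → i ∉ T) → True := fun _ _ _ => trivial
  have hnullT : ∀ T ⊆ N, ∀ x y : ι, x ∈ T → y ∉ T →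
      (∀ S ⊆ N \ {x, y}, u (insert x S) - u S = 0) → dividend u T = 0 := by
    intro T hTN x y hxT hyT hx
    apply dividend_null_s13 u T x hxT
    intro S hS
    have hSsub : S ⊆ N \ {x, y} := by
      intro a ha
      have haT : a ∈ T.erase x := hS ha
      rw [Finset.mem_sdiff]
      refine ⟨hTN (Finset.mem_of_mem_erase haT), ?_⟩
      simp only [Finset.mem_insert, Finset.mem_singleton]
      rintro (rfl | rfl)
      · exact (Finset.notMem_erase a T) haT
      · exact hyT (Finset.mem_of_mem_erase haT)
    have := hx S hSsub
    linarith
  have hmdi : ∀ S ⊆ N \ {i, j}, u (insert i S) - u S = 0 := fun S hS => (hmd S hS).1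
  have hmdj : ∀ S ⊆ N \ {j, i}, u (insert j S) - u S = 0 := by
    intro S hS
    have : ({j, i} : Finset ι) = {i, j} := Finset.pair_comm j i
    exact (hmd S (this ▸ hS)).2
  have key : Owen u N M B k i = Owen u N M B k j := by
    unfold Owen
    rw [Finset.sum_filter, Finset.sum_filter]
    apply Finset.sum_congr rfl
    intro T hT
    rw [Finset.mem_powerset] at hT
    by_cases hiT : i ∈ T <;> by_cases hjT : j ∈ T <;> simp only [hiT, hjT, if_true, if_false]
    · have : dividend u T = 0 := hnullT T hT i j hiT hjT hmdi
      rw [this, zero_div]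
    · have : dividend u T = 0 := hnullT T hT j i hjT hiT hmdj
      rw [this, zero_div]
  have lin : ∀ x : ι, Owen v N M B k x - Owen w N M B k x = Owen u N M B k x := by
    intro x
    unfold Owen
    rw [← Finset.sum_sub_distrib]
    apply Finset.sum_congr rfl
    intro T _
    rw [show dividend u T = dividend v T - dividend w T from dividend_sub v w T]
    ring
  linarith [lin i, lin j, key]
end
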